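/- arXiv:1907.08247 — 2 statements merged into one kernel-verified Lean document; each statement's English description precedes it below -/
import Mathlib

section
/- Let S: {0,1}* → ℕ be the monoid homomorphism with S(0) = a and S(1) = b where 4 ≤ a < b and gcd(a,b) = 1. Then the set ℕ \ { S(u) : u a factor of the paperfolding word } is infinite. -/
/-- letter of the ordinary paperfolding word at position `m` (positions start at 1):
writing `m = k * 2^j` with `k` odd, the letter is `0` if `k ≡ 1 (mod 4)` and `1` otherwise. -/
def pf (m : ℕ) : ℕ := if (m / 2 ^ (padicValNat 2 m)) % 4 = 1 then 0 else 1

/-- the length-`n` factor of `w` starting at position `i`. -/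
def factorAt (w : ℕ → ℕ) (i n : ℕ) : List ℕ := (List.range n).map (fun j => w (i + j))

/-- `u` is a factor of the 1-indexed infinite word `w`. -/
def IsFactor (w : ℕ → ℕ) (u : List ℕ) : Prop := ∃ i ≥ 1, u = factorAt w i u.length

/-!
A window of length `2^(k+2)` of the paperfolding word has `2^k` more ones than a window of half
its length (its odd positions alternate `0, 1`, its even positions repeat a window of the word), so
`|u|₀ - |u|₁` survives halving and every window of length `2^(k+1)` has `||u|₀ - |u|₁| ≤ 2`.
Adding or removing a letter changes `|u|₀ - |u|₁` by one, hence every factor satisfies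
`||u|₀ - |u|₁| ≤ ||u| - 2^(k+1)| + 2`.

On the other hand, if `a x + b y = a (c - 2) + b (c + 2)` with `a, b` coprime, then
`x = c - 2 + b t` and `y = c + 2 - a t` for some integer `t`, so `|x - y| = |(a + b) t - 4|`
exceeds `|x + y - 2c| + 2 = (b - a) |t| + 2` as soon as `a ≥ 4`. With `c = 2^(k+1)` this shows
that none of the infinitely many values `a (2^(k+1) - 2) + b (2^(k+1) + 2)` is some `S(u)`.
-/

open Finset

namespace List

lemma count_zero_add_count_one {u : List ℕ} (hu : ∀ x ∈ u, x ≤ 1) :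
    u.count 0 + u.count 1 = u.length := by
  induction u with
  | nil => rfl
  | cons x u ih =>
    have hx := hu x mem_cons_self
    have := ih fun y hy => hu y (mem_cons_of_mem x hy)
    simp only [count_cons, length_cons, beq_iff_eq]
    split_ifs <;> omega

lemma count_one_eq_sum {u : List ℕ} (hu : ∀ x ∈ u, x ≤ 1) : u.count 1 = u.sum := by
  induction u with
  | nil => rfl
  | cons x u ih =>
    have hx := hu x mem_cons_self
    have := ih fun y hy => hu y (mem_cons_of_mem x hy)
    simp only [count_cons, sum_cons, beq_iff_eq]
    split_ifs <;> omega

end List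

lemma sum_factorAt (w : ℕ → ℕ) (i n : ℕ) :
    (factorAt w i n).sum = ∑ j ∈ range n, w (i + j) := by
  induction n with
  | zero => rfl
  | succ n ih => simp [factorAt, List.range_succ, sum_range_succ, ← ih]

lemma pf_le_one (m : ℕ) : pf m ≤ 1 := by
  unfold pf; split <;> simp

lemma pf_two_mul_add_one (m : ℕ) : pf (2 * m + 1) = m % 2 := by
  have hv : padicValNat 2 (2 * m + 1) = 0 := padicValNat.eq_zero_of_not_dvd (by omega)
  unfold pf
  rw [hv, pow_zero, Nat.div_one]
  split <;> omega

lemma pf_two_mul {m : ℕ} (hm : m ≠ 0) : pf (2 * m) = pf m := by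
  have hv : padicValNat 2 (2 * m) = padicValNat 2 m + 1 := by
    rw [padicValNat.mul two_ne_zero hm, padicValNat.self one_lt_two, add_comm]
  unfold pf
  rw [hv, pow_succ', Nat.mul_div_mul_left _ _ two_pos]

lemma IsFactor.forall_le_one {u : List ℕ} (hu : IsFactor pf u) : ∀ x ∈ u, x ≤ 1 := by
  obtain ⟨i, -, hu⟩ := hu
  rw [hu]
  simp [factorAt, pf_le_one]

def prefixOnes (N : ℕ) : ℕ := ∑ i ∈ range N, pf (i + 1)

lemma prefixOnes_add (N t : ℕ) :
    prefixOnes (N + t) = prefixOnes N + ∑ j ∈ range t, pf (N + 1 + j) := by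
  simp only [prefixOnes, sum_range_add, add_right_comm]

lemma prefixOnes_le_prefixOnes_add (N t : ℕ) : prefixOnes N ≤ prefixOnes (N + t) := by
  rw [prefixOnes_add]
  exact Nat.le_add_right _ _

lemma prefixOnes_add_le (N t : ℕ) : prefixOnes (N + t) ≤ prefixOnes N + t := by
  rw [prefixOnes_add]
  gcongr
  simpa using sum_le_card_nsmul (range t) _ 1 fun j _ => pf_le_one (N + 1 + j)

lemma prefixOnes_two_mul (m : ℕ) : prefixOnes (2 * m) = m / 2 + prefixOnes m := by
  induction m with
  | zero => rfl
  | succ m ih =>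
    have h := prefixOnes_add (2 * m) 2
    have h1 := prefixOnes_add m 1
    simp only [sum_range_succ, sum_range_zero, zero_add, add_zero] at h h1
    rw [show 2 * m + 1 + 1 = 2 * (m + 1) by ring, pf_two_mul (m := m + 1) (by omega),
      pf_two_mul_add_one] at h
    rw [h, ih, h1]
    omega

-- The odd positions `≤ N` carry `(N + 1) / 4` ones (those `≡ 3 mod 4`); position `2m` repeats `m`.
lemma prefixOnes_eq (N : ℕ) : prefixOnes N = (N + 1) / 4 + prefixOnes (N / 2) := by
  obtain ⟨m, rfl | rfl⟩ := Nat.even_or_odd' N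
  · rw [prefixOnes_two_mul, Nat.mul_div_cancel_left m two_pos]
    omega
  · have h := prefixOnes_add (2 * m) 1
    simp only [sum_range_one, add_zero, pf_two_mul_add_one] at h
    rw [h, prefixOnes_two_mul, show (2 * m + 1) / 2 = m by omega]
    omega

lemma prefixOnes_add_two_pow_balanced (k j : ℕ) :
    2 * prefixOnes (j + 2 ^ (k + 1)) ≤ 2 * prefixOnes j + 2 ^ (k + 1) + 2 ∧
      2 * prefixOnes j + 2 ^ (k + 1) ≤ 2 * prefixOnes (j + 2 ^ (k + 1)) + 2 := by
  induction k generalizing j with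
  | zero =>
    rw [zero_add, pow_one]
    have := prefixOnes_add_le j 2
    have := prefixOnes_le_prefixOnes_add j 2
    omega
  | succ k ih =>
    have ih := ih (j / 2)
    rw [show 2 ^ (k + 1) = 2 * 2 ^ k by ring] at ih
    rw [prefixOnes_eq (j + _), prefixOnes_eq j, show 2 ^ (k + 1 + 1) = 4 * 2 ^ k by ring,
      show (j + 4 * 2 ^ k + 1) / 4 = (j + 1) / 4 + 2 ^ k by omega,
      show (j + 4 * 2 ^ k) / 2 = j / 2 + 2 * 2 ^ k by omega]
    omega

lemma IsFactor.abs_count_zero_sub_count_one_le {u : List ℕ} (hu : IsFactor pf u) (k : ℕ) :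
    |(u.count 0 : ℤ) - u.count 1| ≤ |(u.length : ℤ) - 2 ^ (k + 1)| + 2 := by
  have hbits := hu.forall_le_one
  obtain ⟨i, hi, hu⟩ := hu
  obtain ⟨j, rfl⟩ : ∃ j, i = j + 1 := ⟨i - 1, by omega⟩
  obtain ⟨n, hn⟩ : ∃ n, u.length = n := ⟨_, rfl⟩
  rw [hn] at hu ⊢
  have hlen : u.count 0 + u.count 1 = n := hn ▸ List.count_zero_add_count_one hbits
  have hones : u.count 1 + prefixOnes j = prefixOnes (j + n) := by
    rw [List.count_one_eq_sum hbits, hu, sum_factorAt, prefixOnes_add, add_comm]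
  have hbal := prefixOnes_add_two_pow_balanced k j
  rw [show (2 : ℤ) ^ (k + 1) = ((2 ^ (k + 1) : ℕ) : ℤ) by push_cast; rfl]
  generalize 2 ^ (k + 1) = P at hbal ⊢
  rcases le_total n P with hle | hle
  · obtain ⟨t, rfl⟩ := Nat.exists_eq_add_of_le hle
    have := prefixOnes_le_prefixOnes_add (j + n) t
    have := prefixOnes_add_le (j + n) t
    rw [← add_assoc] at hbal
    rw [abs_sub_comm (n : ℤ), Nat.cast_add, add_sub_cancel_left, Nat.abs_cast, abs_le]
    omega
  · obtain ⟨t, rfl⟩ := Nat.exists_eq_add_of_le hle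
    have := prefixOnes_le_prefixOnes_add (j + P) t
    have := prefixOnes_add_le (j + P) t
    rw [← add_assoc] at hones
    rw [Nat.cast_add, add_sub_cancel_left, Nat.abs_cast, abs_le]
    omega

lemma add_two_lt_abs_sub_of_mul_add_mul_eq {a b x y c : ℤ} (ha : 4 ≤ a) (hab : a < b)
    (hco : IsCoprime a b) (h : a * x + b * y = a * (c - 2) + b * (c + 2)) :
    |x + y - 2 * c| + 2 < |x - y| := by
  obtain ⟨t, ht⟩ : b ∣ x - c + 2 :=
    hco.symm.dvd_of_dvd_mul_left ⟨c + 2 - y, by linear_combination h⟩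
  have hy : c + 2 - y = a * t :=
    (mul_left_cancel₀ (by omega : b ≠ 0) (by linear_combination h - a * ht)).symm
  have hsum : x + y - 2 * c = (b - a) * t := by linear_combination ht - hy
  have hdiff : x - y = (a + b) * t - 4 := by linear_combination ht + hy
  rw [hsum, hdiff]
  rcases lt_trichotomy t 0 with ht | rfl | ht
  · rw [abs_of_neg (by nlinarith), abs_of_neg (by nlinarith)]
    nlinarith
  · norm_num
  · rw [abs_of_pos (by nlinarith), abs_of_pos (by nlinarith)]
    nlinarith

/-- If `S(0) = a`, `S(1) = b` with `4 ≤ a < b` and `gcd(a,b) = 1`, then the set of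
natural numbers not of the form `S(u) = a|u|₀ + b|u|₁` for a factor `u` of the
paperfolding word is infinite. -/
theorem paperfolding_not_frobenius (a b : ℕ) (ha : 4 ≤ a) (hab : a < b)
    (hco : Nat.Coprime a b) :
    {m : ℕ | ¬ ∃ u : List ℕ, IsFactor pf u ∧ m = a * u.count 0 + b * u.count 1}.Infinite := by
  refine Set.infinite_of_forall_exists_gt fun N =>
    ⟨a * (2 ^ (N + 1) - 2) + b * (2 ^ (N + 1) + 2), ?_, ?_⟩
  · rintro ⟨u, hu, hm⟩
    have hpow : 2 ≤ 2 ^ (N + 1) := Nat.le_self_pow N.succ_ne_zero 2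
    have hgap := add_two_lt_abs_sub_of_mul_add_mul_eq (x := u.count 0) (y := u.count 1)
      (c := 2 ^ (N + 1)) (by exact_mod_cast ha) (by exact_mod_cast hab)
      (Nat.isCoprime_iff_coprime.mpr hco) (by rw [← Nat.cast_two]; exact_mod_cast hm.symm)
    have hbal := hu.abs_count_zero_sub_count_one_le (N + 1)
    rw [← List.count_zero_add_count_one hu.forall_le_one, pow_succ' _ (N + 1)] at hbal
    push_cast at hbal
    linarith
  · calc N < 2 ^ N := Nat.lt_two_pow_self
      _ ≤ 2 ^ (N + 1) + 2 := by rw [pow_succ]; omega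
      _ ≤ b * (2 ^ (N + 1) + 2) := Nat.le_mul_of_pos_left _ (by omega)
      _ ≤ _ := Nat.le_add_left _ _
end

section
/- If w is a factor of the paperfolding word, then the reversed complement of w (reverse w and swap 0 ↔ 1) is also a factor of the paperfolding word. -/
theorem length_factorAt (w : ℕ → ℕ) (i n : ℕ) : (factorAt w i n).length = n := by
  simp [factorAt]

theorem map_reverse_factorAt {w f : ℕ → ℕ} {c i n : ℕ} (hc : i + n ≤ c + 1)
    (hw : ∀ x, i ≤ x → x < i + n → w (c - x) = f (w x)) :
    (factorAt w i n).reverse.map f = factorAt w (c + 1 - (i + n)) n := by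
  refine List.ext_getElem (by simp [factorAt]) fun t ht _ => ?_
  have htn : t < n := by simpa [factorAt] using ht
  simp only [factorAt, List.getElem_map, List.getElem_reverse, List.getElem_range,
    List.length_map, List.length_range]
  rw [← hw _ (by omega) (by omega)]
  congr 1
  omega

theorem pf_two_pow_mul (j : ℕ) {k : ℕ} (hk : Odd k) :
    pf (2 ^ j * k) = if k % 4 = 1 then 0 else 1 := by
  have hval : padicValNat 2 (2 ^ j * k) = j := by
    rw [padicValNat.mul (by positivity) (by rintro rfl; simp at hk), padicValNat.prime_pow,
      padicValNat.eq_zero_of_not_dvd hk.not_two_dvd_nat, add_zero]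
  rw [pf, hval, Nat.mul_div_cancel_left _ (by positivity)]

theorem pf_two_pow_sub {M m : ℕ} (hm : 0 < m) (h : 2 * m < 2 ^ M) :
    pf (2 ^ M - m) = 1 - pf m := by
  obtain ⟨j, k, hk, rfl⟩ := Nat.exists_eq_two_pow_mul_odd hm.ne'
  have hjM : j + 1 < M := by
    have : 2 ^ (j + 1) < 2 ^ M := by
      calc 2 ^ (j + 1) ≤ 2 * (2 ^ j * k) := by rw [pow_succ']; nlinarith [hk.pos]
        _ < 2 ^ M := h
    exact (Nat.pow_lt_pow_iff_right (by norm_num)).mp this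
  obtain ⟨r, rfl⟩ : ∃ r, M = j + 2 + r := ⟨M - (j + 2), by omega⟩
  have hpow : 2 ^ (j + 2 + r) = 2 ^ j * (4 * 2 ^ r) := by ring
  have hkr : k < 4 * 2 ^ r := by
    rw [hpow] at h
    nlinarith [Nat.two_pow_pos j]
  have hk2 : k % 2 = 1 := Nat.odd_iff.mp hk
  have hK : Odd (4 * 2 ^ r - k) := Nat.odd_iff.mpr (by omega)
  rw [hpow, ← Nat.mul_sub, pf_two_pow_mul j hK, pf_two_pow_mul j hk]
  have : k % 4 = 1 ∨ k % 4 = 3 := by omega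
  rcases this with h1 | h3
  · rw [if_neg (by omega), if_pos h1]
  · rw [if_pos (by omega), if_neg (by omega)]

/-- If `w` is a factor of the paperfolding word, so is its reversed complement. -/
theorem paperfolding_reversed_complement (u : List ℕ) (hu : IsFactor pf u) :
    IsFactor pf (u.reverse.map (fun x => 1 - x)) := by
  obtain ⟨i, hi, hu⟩ := hu
  set n := u.length
  set c := 2 ^ (i + n + 1) with hc
  have hlarge : 2 * (i + n) < c := by
    rw [hc, pow_succ']
    exact Nat.mul_lt_mul_of_pos_left Nat.lt_two_pow_self (by norm_num)
  refine ⟨c + 1 - (i + n), by omega, ?_⟩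
  rw [List.length_map, List.length_reverse, hu, length_factorAt]
  exact map_reverse_factorAt (by omega) fun x hix hxn => pf_two_pow_sub (by omega) (by omega)
end
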